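/- Let k ≥ 2 and d_j = 2 for all 1 ≤ j ≤ k (a k-qubit system), and let λ ∈ ℂ with λ ≠ 0. Then the linear span S_{P,λ} of the Parthasarathy space S_P and the van der Monde vector z_λ contains no nonzero product vector other than the scalar multiples of z_λ; that is, S_{P,λ} is a quasi-completely entangled subspace of product index 1. -/

import Mathlib

noncomputable section

open scoped BigOperators

/-- the k-qubit Hilbert space (ℂ²)^{⊗k}, realized as ℂ^{2^k} -/
abbrev Hq (k : ℕ) : Type := EuclideanSpace ℂ (Fin k → Fin 2)

/-- elementary tensor u₁ ⊗ ⋯ ⊗ u_k of k qubit vectors -/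
def tpq (k : ℕ) (u : Fin k → EuclideanSpace ℂ (Fin 2)) : Hq k :=
  WithLp.toLp 2 (fun i => ∏ j, u j (i j))

/-- the van der Monde vector z_λ = ⊗_j (|0⟩ + λ|1⟩) -/
def zq (k : ℕ) (lam : ℂ) : Hq k := WithLp.toLp 2 (fun i => ∏ j, lam ^ ((i j : ℕ)))

/-- the van der Monde vector z_∞ = |1⟩^{⊗k} -/
def zqinf (k : ℕ) : Hq k := WithLp.toLp 2 (fun i => ∏ j, (if i j = 1 then 1 else 0))

/-- the span of all van der Monde vectors -/
def Fq (k : ℕ) : Submodule ℂ (Hq k) :=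
  Submodule.span ℂ (insert (zqinf k) (Set.range (zq k)))

/-- the Parthasarathy completely entangled subspace of the k-qubit system -/
def SPq (k : ℕ) : Submodule ℂ (Hq k) := (Fq k)ᗮ

/-- the set of one-dimensional subspaces of `T` spanned by (nonzero) product vectors -/
def prodLinesQ (k : ℕ) (T : Submodule ℂ (Hq k)) : Set (Submodule ℂ (Hq k)) :=
  {L | ∃ ξ : Hq k, ξ ≠ 0 ∧ ξ ∈ T ∧ (∃ u, ξ = tpq k u) ∧ L = Submodule.span ℂ {ξ}}

/-!
Write a product vector in `S_P ⊔ ℂ z_λ` as `⊗ⱼ uⱼ = s + c z_λ` with `s ⊥ F`. Pairing with `z_μ`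
and with `z_∞` gives `∏ⱼ (uⱼ₀ + t uⱼ₁) = c (1 + tλ)ᵏ` for every `t` and `∏ⱼ uⱼ₁ = c λᵏ`.
If `c = 0`, a product of linear polynomials vanishing on the infinite field `ℂ` has an identically
zero factor, so the vector is `0`. If `c ≠ 0`, then every `uⱼ₁ ≠ 0` because `λ ≠ 0`, and the root
`-uⱼ₀/uⱼ₁` of the `j`-th factor must be the root of `1 + tλ`; hence `uⱼ = uⱼ₀ (1, λ)` for all `j`,
and the vector is a multiple of `z_λ`.
-/

open scoped ComplexConjugate InnerProductSpace

theorem exists_inner_eq_mul_of_mem_orthogonal_sup {𝕜 E : Type*} [RCLike 𝕜]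
    [NormedAddCommGroup E] [InnerProductSpace 𝕜 E] {K : Submodule 𝕜 E} {z ξ : E}
    (h : ξ ∈ Kᗮ ⊔ Submodule.span 𝕜 {z}) : ∃ c : 𝕜, ∀ v ∈ K, ⟪v, ξ⟫_𝕜 = c * ⟪v, z⟫_𝕜 := by
  obtain ⟨s, hs, y, hy, rfl⟩ := Submodule.mem_sup.1 h
  obtain ⟨c, rfl⟩ := Submodule.mem_span_singleton.1 hy
  refine ⟨c, fun v hv => ?_⟩
  rw [inner_add_right, Submodule.inner_right_of_mem_orthogonal hv hs, zero_add, inner_smul_right]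

section LinearFactors

variable {K ι : Type*} [Field K] [Fintype ι] {a b : ι → K}

theorem exists_eq_zero_of_prod_add_mul_eq_zero [Infinite K]
    (h : ∀ t, ∏ i, (a i + t * b i) = 0) : ∃ i, a i = 0 ∧ b i = 0 := by
  classical
  by_contra! hab
  obtain ⟨t, ht⟩ := Infinite.exists_notMem_finset (Finset.univ.image fun i => -a i / b i)
  refine Finset.prod_ne_zero_iff.2 (fun i _ hi => ?_) (h t)
  rcases eq_or_ne (b i) 0 with hb | hb
  · exact hab i (by simpa [hb] using hi) hb
  · refine ht (Finset.mem_image.2 ⟨i, Finset.mem_univ i, ?_⟩)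
    rw [div_eq_iff hb]
    linear_combination -hi

theorem eq_mul_of_prod_add_mul_eq {c lam : K} {n : ℕ} (hc : c ≠ 0)
    (h : ∀ t, ∏ i, (a i + t * b i) = c * (1 + t * lam) ^ n) {j : ι} (hj : b j ≠ 0) :
    b j = lam * a j := by
  have hvanish : ∏ i, (a i + -a j / b j * b i) = 0 :=
    Finset.prod_eq_zero (Finset.mem_univ j) (by field_simp; ring)
  rw [h, mul_eq_zero, or_iff_right hc, pow_eq_zero_iff'] at hvanish
  field_simp at hvanish
  linear_combination hvanish.1

end LinearFactors

section ProductVectors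

variable (k : ℕ)

theorem inner_tpq_tpq (v w : Fin k → EuclideanSpace ℂ (Fin 2)) :
    ⟪tpq k v, tpq k w⟫_ℂ = ∏ j, ⟪v j, w j⟫_ℂ := by
  simp only [PiLp.inner_apply, tpq, RCLike.inner_apply, Fintype.prod_sum, map_prod,
    ← Finset.prod_mul_distrib]

theorem tpq_smul (c : Fin k → ℂ) (v : Fin k → EuclideanSpace ℂ (Fin 2)) :
    tpq k (fun j => c j • v j) = (∏ j, c j) • tpq k v := by
  ext i
  simp [tpq, Finset.prod_mul_distrib]

theorem tpq_eq_zero {u : Fin k → EuclideanSpace ℂ (Fin 2)} {j : Fin k} (hj : u j = 0) :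
    tpq k u = 0 := by
  ext i
  simp [tpq, Finset.prod_eq_zero (Finset.mem_univ j), hj]

theorem zq_eq_tpq (lam : ℂ) : zq k lam = tpq k (fun _ => !₂[1, lam]) := by
  ext i
  simp only [zq, tpq, PiLp.toLp_apply]
  refine Finset.prod_congr rfl fun j _ => ?_
  generalize i j = b
  fin_cases b <;> simp

theorem zqinf_eq_tpq : zqinf k = tpq k (fun _ => EuclideanSpace.single 1 1) := by
  ext i
  simp [zqinf, tpq, PiLp.single_apply]

theorem zq_ne_zero (lam : ℂ) : zq k lam ≠ 0 := fun h => by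
  simpa [zq] using congr_arg (fun v : Hq k => v fun _ => 0) h

theorem zq_mem_Fq (lam : ℂ) : zq k lam ∈ Fq k :=
  Submodule.subset_span (Set.mem_insert_of_mem _ ⟨lam, rfl⟩)

theorem zqinf_mem_Fq : zqinf k ∈ Fq k :=
  Submodule.subset_span (Set.mem_insert _ _)

theorem inner_zq_tpq (μ : ℂ) (u : Fin k → EuclideanSpace ℂ (Fin 2)) :
    ⟪zq k μ, tpq k u⟫_ℂ = ∏ j, (u j 0 + conj μ * u j 1) := by
  rw [zq_eq_tpq, inner_tpq_tpq]
  simp [PiLp.inner_apply, Fin.sum_univ_two, mul_comm]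

theorem inner_zqinf_tpq (u : Fin k → EuclideanSpace ℂ (Fin 2)) :
    ⟪zqinf k, tpq k u⟫_ℂ = ∏ j, u j 1 := by
  simp [zqinf_eq_tpq, inner_tpq_tpq, EuclideanSpace.inner_single_left]

theorem tpq_eq_smul_zq {lam : ℂ} {u : Fin k → EuclideanSpace ℂ (Fin 2)}
    (h : ∀ j, u j 1 = lam * u j 0) : tpq k u = (∏ j, u j 0) • zq k lam := by
  rw [zq_eq_tpq, ← tpq_smul]
  congr 1
  funext j
  ext b
  fin_cases b <;> simp [h j, mul_comm]

end ProductVectors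

theorem exists_eq_smul_zq_of_tpq_mem (k : ℕ) {lam : ℂ} (hlam : lam ≠ 0)
    {u : Fin k → EuclideanSpace ℂ (Fin 2)} (hu : tpq k u ∈ SPq k ⊔ Submodule.span ℂ {zq k lam}) :
    ∃ c : ℂ, tpq k u = c • zq k lam := by
  obtain ⟨c, hc⟩ := exists_inner_eq_mul_of_mem_orthogonal_sup hu
  have hlinear : ∀ t : ℂ, ∏ j, (u j 0 + t * u j 1) = c * (1 + t * lam) ^ k := fun t => by
    simpa [inner_zq_tpq, zq_eq_tpq k lam] using hc _ (zq_mem_Fq k (conj t))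
  have hinf : ∏ j, u j 1 = c * lam ^ k := by
    simpa [inner_zqinf_tpq, zq_eq_tpq k lam] using hc _ (zqinf_mem_Fq k)
  rcases eq_or_ne c 0 with rfl | hc0
  · obtain ⟨j, hj0, hj1⟩ := exists_eq_zero_of_prod_add_mul_eq_zero (by simpa using hlinear)
    have huj : u j = 0 := by
      ext b
      fin_cases b <;> simpa
    exact ⟨0, by rw [zero_smul]; exact tpq_eq_zero k huj⟩
  · have hu1 : ∀ j, u j 1 ≠ 0 := fun j =>
      Finset.prod_ne_zero_iff.1 (hinf ▸ mul_ne_zero hc0 (pow_ne_zero k hlam)) j (Finset.mem_univ j)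
    exact ⟨_, tpq_eq_smul_zq k fun j => eq_mul_of_prod_add_mul_eq hc0 hlinear (hu1 j)⟩

theorem statement11_general (k : ℕ) (lam : ℂ) (hlam : lam ≠ 0) :
    (∀ ξ ∈ SPq k ⊔ Submodule.span ℂ {zq k lam}, ξ ≠ 0 →
      (∃ u, ξ = tpq k u) → ∃ c : ℂ, ξ = c • zq k lam) ∧
    prodLinesQ k (SPq k ⊔ Submodule.span ℂ {zq k lam}) =
      {Submodule.span ℂ {zq k lam}} := by
  have hprod : ∀ ξ ∈ SPq k ⊔ Submodule.span ℂ {zq k lam}, ξ ≠ 0 →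
      (∃ u, ξ = tpq k u) → ∃ c : ℂ, ξ = c • zq k lam := by
    rintro ξ hξ - ⟨u, rfl⟩
    exact exists_eq_smul_zq_of_tpq_mem k hlam hξ
  refine ⟨hprod, Set.eq_singleton_iff_unique_mem.2 ⟨?_, ?_⟩⟩
  · exact ⟨zq k lam, zq_ne_zero k lam,
      Submodule.mem_sup_right (Submodule.mem_span_singleton_self _), ⟨_, zq_eq_tpq k lam⟩, rfl⟩
  · rintro L ⟨ξ, hξ0, hξ, hξprod, rfl⟩
    obtain ⟨c, rfl⟩ := hprod ξ hξ hξ0 hξprod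
    exact Submodule.span_singleton_smul_eq (isUnit_iff_ne_zero.2 (left_ne_zero_of_smul hξ0)) _

theorem statement11 (k : ℕ) (hk : 2 ≤ k) (lam : ℂ) (hlam : lam ≠ 0) :
    (∀ ξ ∈ SPq k ⊔ Submodule.span ℂ {zq k lam}, ξ ≠ 0 →
      (∃ u, ξ = tpq k u) → ∃ c : ℂ, ξ = c • zq k lam) ∧
    prodLinesQ k (SPq k ⊔ Submodule.span ℂ {zq k lam}) =
      {Submodule.span ℂ {zq k lam}} :=
  statement11_general k lam hlam
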